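/- arXiv:2308.03064 — 2 statements merged into one kernel-verified Lean document; each statement's English description precedes it below -/
import Mathlib

section
/- Let p be prime and n > 1 a natural. For any matrices A, B, Q ∈ 𝕃_p^{n×n} such that det(Q) ≠ 0 and A Q = Q B, the LCA F_A over (ℤ/pℤ)^n determined by A is positively expansive if and only if the LCA F_B over (ℤ/pℤ)^n determined by B is positively expansive. -/
open LaurentPolynomial
open scoped Classical

/-- `𝕃 m`: Laurent polynomials over `ℤ/mℤ`. -/
abbrev Lm (m : ℕ) := LaurentPolynomial (ZMod m)

/-- `deg⁺` of a Laurent polynomial: the max of its support (`⊥ = -∞` for `0`). -/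
noncomputable def degP {m : ℕ} (α : Lm m) : WithBot ℤ := α.coeff.support.max

/-- `deg⁻` of a Laurent polynomial: the min of its support (`⊤ = +∞` for `0`). -/
noncomputable def degM {m : ℕ} (α : Lm m) : WithTop ℤ := α.coeff.support.min

/-- A monic polynomial `π(t) = α₀ + α₁ t + ⋯ + α_{n-1} t^{n-1} + tⁿ` over `𝕃 m`
is *expansive* if `α₀ ≠ 0`, `deg⁺(α₀) > 0`, `deg⁺(α₀) > deg⁺(αᵢ)`,
`deg⁻(α₀) < 0` and `deg⁻(α₀) < deg⁻(αᵢ)` for all `1 ≤ i ≤ n-1`. -/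
def ExpansivePoly {m : ℕ} (π : Polynomial (Lm m)) : Prop :=
  π.coeff 0 ≠ 0 ∧
  ((0 : WithBot ℤ) < degP (π.coeff 0) ∧
    ∀ i : ℕ, 1 ≤ i → i < π.natDegree → degP (π.coeff i) < degP (π.coeff 0)) ∧
  (degM (π.coeff 0) < (0 : WithTop ℤ) ∧
    ∀ i : ℕ, 1 ≤ i → i < π.natDegree → degM (π.coeff 0) < degM (π.coeff i))

/-- A matrix over `𝕃 m` is expansive if its characteristic polynomial is. -/
noncomputable def ExpansiveMatrix {m n : ℕ} (A : Matrix (Fin n) (Fin n) (Lm m)) : Prop :=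
  ExpansivePoly A.charpoly

/-- The Tychonoff distance on the configuration space `(ℤ → S)`. -/
noncomputable def tdist {S : Type*} (c c' : ℤ → S) : ℝ :=
  if c = c' then 0
  else (2 : ℝ) ^ (-((sInf {k : ℕ | ∃ j : ℤ, j.natAbs = k ∧ c j ≠ c' j} : ℕ) : ℤ))

/-- A map on the configuration space is positively expansive if for some `ε > 0`
any two distinct configurations are eventually `≥ ε` apart. -/
def PosExpansive {S : Type*} (F : (ℤ → S) → (ℤ → S)) : Prop :=
  ∃ ε : ℝ, 0 < ε ∧ ∀ c c' : ℤ → S, c ≠ c' →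
    ∃ ℓ : ℕ, ε ≤ tdist (F^[ℓ] c) (F^[ℓ] c')

/-- The linear CA over `(ℤ/mℤ)ⁿ` determined by a matrix `A ∈ 𝕃_m^{n×n}`:
`F_A(c)_i = ∑_{k ∈ ℤ} A⁽ᵏ⁾ · c_{i-k}` where `A⁽ᵏ⁾` is the coefficient matrix of `Xᵏ` in `A`.
The same formula gives the action of `A` on two-sided formal power series `𝕊_m^n`. -/
noncomputable def lcaFun {m n : ℕ} (A : Matrix (Fin n) (Fin n) (Lm m)) :
    (ℤ → Fin n → ZMod m) → (ℤ → Fin n → ZMod m) :=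
  fun c i a => ∑ b, Finsupp.sum (A a b).coeff (fun k coef => coef * c (i - k) b)

/-- `Left(𝕊ⁿ_m, s)`: two-sided series with `deg⁺ = s`. -/
def SLeft {V : Type*} [Zero V] (s : ℤ) : Set (ℤ → V) :=
  {υ | (∀ j : ℤ, s < j → υ j = 0) ∧ υ s ≠ 0}

/-- `Left*(𝕊ⁿ_m, s)`: two-sided series with `deg⁺ ≤ s`. -/
def SLeftStar {V : Type*} [Zero V] (s : ℤ) : Set (ℤ → V) :=
  {υ | ∀ j : ℤ, s < j → υ j = 0}

/-- `Right(𝕊ⁿ_m, s)`: two-sided series with `deg⁻ = s`. -/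
def SRight {V : Type*} [Zero V] (s : ℤ) : Set (ℤ → V) :=
  {υ | (∀ j : ℤ, j < s → υ j = 0) ∧ υ s ≠ 0}

/-- `Right*(𝕊ⁿ_m, s)`: two-sided series with `deg⁻ ≥ s`. -/
def SRightStar {V : Type*} [Zero V] (s : ℤ) : Set (ℤ → V) :=
  {υ | ∀ j : ℤ, j < s → υ j = 0}

/-- Reduction of a Laurent polynomial over `ℤ/mℤ` modulo `q` (for `q ∣ m`). -/
noncomputable def lmod {m q : ℕ} (h : q ∣ m) (α : Lm m) : Lm q :=
  AddMonoidAlgebra.ofCoeff (Finsupp.mapRange (ZMod.castHom h (ZMod q)) (map_zero _) α.coeff)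

/-- Entrywise reduction of a matrix of Laurent polynomials modulo `q`. -/
noncomputable def matMod {m q n : ℕ} (h : q ∣ m) (B : Matrix (Fin n) (Fin n) (Lm m)) :
    Matrix (Fin n) (Fin n) (Lm q) :=
  fun a b => lmod h (B a b)

/-- `deg⁺` on the field of fractions of `𝕃 p`: `deg⁺(α/β) = deg⁺(α) - deg⁺(β)`,
computed on a representation given by `IsLocalization.sec`; `deg⁺ 0 = ⊥`. -/
noncomputable def degPF {p : ℕ} (φ : FractionRing (Lm p)) : WithBot ℤ :=
  if φ = 0 then ⊥
  else ((WithBot.unbotD 0 (degP ((IsLocalization.sec (nonZeroDivisors (Lm p)) φ).1))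
        - WithBot.unbotD 0 (degP (((IsLocalization.sec (nonZeroDivisors (Lm p)) φ).2 : Lm p))) : ℤ) : WithBot ℤ)

/-- The `(x, y)` entry (with `ℕ`-indices) of the companion matrix of a polynomial `π`
viewed as a `d × d` matrix: subdiagonal entries `1`,
last column `(-π.coeff 0, …, -π.coeff (d-1))ᵀ`, the rest `0`. -/
def companionEntry {R : Type*} [CommRing R] (d : ℕ) (π : Polynomial R) (x y : ℕ) : R :=
  if y = d - 1 then -π.coeff x else if x = y + 1 then 1 else 0

/-- The companion matrix (as a `d × d` matrix) of a polynomial `π`. -/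
def companionMatrix {R : Type*} [CommRing R] (d : ℕ) (π : Polynomial R) :
    Matrix (Fin d) (Fin d) R :=
  fun a b => companionEntry d π a b

/-- A matrix is in rational canonical form if it is block diagonal with blocks the
companion matrices of monic polynomials `π₁, …, π_s` of degree at least one with
`πᵢ ∣ πⱼ` for `i ≤ j`.  The blocks are described by the offsets `off i` of their
top-left corners. -/
def IsRCF {R : Type*} [CommRing R] {n : ℕ} (C : Matrix (Fin n) (Fin n) R) : Prop :=
  ∃ (s : ℕ) (π : Fin s → Polynomial R) (off : Fin (s + 1) → ℕ),
    (∀ i, (π i).Monic) ∧ (∀ i, 1 ≤ (π i).natDegree) ∧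
    (∀ i j, i ≤ j → π i ∣ π j) ∧
    off 0 = 0 ∧ off (Fin.last s) = n ∧
    (∀ i : Fin s, off i.succ = off i.castSucc + (π i).natDegree) ∧
    (∀ (i : Fin s) (a b : Fin n),
      off i.castSucc ≤ (a : ℕ) → (a : ℕ) < off i.succ →
      off i.castSucc ≤ (b : ℕ) → (b : ℕ) < off i.succ →
      C a b = companionEntry (π i).natDegree (π i)
        ((a : ℕ) - off i.castSucc) ((b : ℕ) - off i.castSucc)) ∧
    (∀ a b : Fin n,
      (∀ i : Fin s, ¬(off i.castSucc ≤ (a : ℕ) ∧ (a : ℕ) < off i.succ ∧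
        off i.castSucc ≤ (b : ℕ) ∧ (b : ℕ) < off i.succ)) → C a b = 0)

/-!
Write `F_M` for `lcaFun M`. Since `F_{MN} = F_M ∘ F_N`, the relation `A Q = Q B` makes `F_Q` a
semiconjugacy from `F_B` to `F_A`. The map `F_Q` is Lipschitz for the Tychonoff distance, with
constant `2 ^ r` for `r` the radius of `Q`, and distinct configurations with the same image are
uniformly far apart: `adj Q * Q = det Q • 1` turns `F_Q c = F_Q c'` into `det Q • (c - c') = 0`,
and a nonzero Laurent polynomial over the field `ℤ/pℤ` annihilates only finitely many
configurations, each being determined by its values on a window of length `deg⁺ - deg⁻`.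
These two facts carry positive expansivity from `F_A` over to `F_B`; for the converse,
`adj Q` intertwines `B` and `A` in the same way.
-/

section Semiring

variable {R V : Type*} [Semiring R] [AddCommMonoid V] [Module R V]

def laurentSMul (g : R[T;T⁻¹]) (d : ℤ → V) : ℤ → V :=
  fun i => g.coeff.sum fun k r => r • d (i - k)

@[simp]
lemma laurentSMul_zero_left (d : ℤ → V) : laurentSMul (0 : R[T;T⁻¹]) d = 0 := by
  funext i; simp [laurentSMul]

@[simp]
lemma laurentSMul_zero_right (g : R[T;T⁻¹]) : laurentSMul g (0 : ℤ → V) = 0 := by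
  funext i; simp [laurentSMul]

lemma laurentSMul_add_left (g h : R[T;T⁻¹]) (d : ℤ → V) :
    laurentSMul (g + h) d = laurentSMul g d + laurentSMul h d := by
  funext i
  exact Finsupp.sum_add_index' (fun _ => zero_smul R _) (fun _ _ _ => add_smul _ _ _)

lemma laurentSMul_single (k : ℤ) (r : R) (d : ℤ → V) :
    laurentSMul (AddMonoidAlgebra.single k r) d = fun i => r • d (i - k) := by
  funext i
  simp only [laurentSMul, AddMonoidAlgebra.coeff_single]
  exact Finsupp.sum_single_index (zero_smul R _)

lemma laurentSMul_add_right (g : R[T;T⁻¹]) (d e : ℤ → V) :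
    laurentSMul g (d + e) = laurentSMul g d + laurentSMul g e := by
  funext i; simp [laurentSMul, Finsupp.sum_add]

lemma laurentSMul_mul (g h : R[T;T⁻¹]) (d : ℤ → V) :
    laurentSMul (g * h) d = laurentSMul g (laurentSMul h d) := by
  induction g using AddMonoidAlgebra.induction_linear with
  | zero => simp
  | add g₁ g₂ h₁ h₂ => rw [add_mul, laurentSMul_add_left, laurentSMul_add_left, h₁, h₂]
  | single k r =>
    induction h using AddMonoidAlgebra.induction_linear with
    | zero => simp
    | add h₁ h₂ ih₁ ih₂ =>
      rw [mul_add, laurentSMul_add_left, laurentSMul_add_left, laurentSMul_add_right, ih₁, ih₂]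
    | single k' r' =>
      funext i
      simp only [AddMonoidAlgebra.single_mul_single, laurentSMul_single, mul_smul, sub_sub]

lemma laurentSMul_sum_left {ι : Type*} (s : Finset ι) (g : ι → R[T;T⁻¹]) (d : ℤ → V) :
    laurentSMul (∑ x ∈ s, g x) d = ∑ x ∈ s, laurentSMul (g x) d :=
  map_sum (AddMonoidHom.mk ⟨(laurentSMul · d), laurentSMul_zero_left d⟩
    (laurentSMul_add_left · · d)) g s

lemma laurentSMul_sum_right {ι : Type*} (s : Finset ι) (g : R[T;T⁻¹]) (d : ι → ℤ → V) :
    laurentSMul g (∑ x ∈ s, d x) = ∑ x ∈ s, laurentSMul g (d x) :=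
  map_sum (AddMonoidHom.mk ⟨laurentSMul g, laurentSMul_zero_right g⟩
    (laurentSMul_add_right g)) d s

lemma laurentSMul_apply_eq_single {g : R[T;T⁻¹]} {d : ℤ → V} {i k₀ : ℤ}
    (h : ∀ k ∈ g.coeff.support, k ≠ k₀ → d (i - k) = 0) :
    laurentSMul g d i = g.coeff k₀ • d (i - k₀) :=
  Finsupp.sum_eq_single k₀
    (fun k hk hne => by rw [h k (Finsupp.mem_support_iff.mpr hk) hne, smul_zero])
    (fun _ => zero_smul R _)

lemma eq_zero_of_laurentSMul_eq_zero [NoZeroSMulDivisors R V] {g : R[T;T⁻¹]} {d : ℤ → V}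
    {lo hi : ℤ} (hlo : g.coeff lo ≠ 0) (hhi : g.coeff hi ≠ 0)
    (hsupp : ∀ k ∈ g.coeff.support, lo ≤ k ∧ k ≤ hi) (hd : laurentSMul g d = 0)
    (hwin : ∀ j, 0 ≤ j → j < hi - lo → d j = 0) : d = 0 := by
  set zeroOn : ℤ → Prop := fun t => ∀ j, t ≤ j → j < t + (hi - lo) → d j = 0
  have vanish {i k₀ : ℤ} (hk₀ : g.coeff k₀ ≠ 0)
      (h : ∀ k ∈ g.coeff.support, k ≠ k₀ → d (i - k) = 0) : d (i - k₀) = 0 := by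
    have := laurentSMul_apply_eq_single h
    rw [hd, Pi.zero_apply, eq_comm] at this
    exact (eq_zero_or_eq_zero_of_smul_eq_zero this).resolve_left hk₀
  -- a zero window grows to the right by isolating the lowest coefficient of `g`,
  -- and to the left by isolating the highest one
  have next {t : ℤ} (ht : zeroOn t) : d (t + (hi - lo)) = 0 := by
    have := vanish (i := t + hi) hlo fun k hk hne => by
      have := hsupp k hk
      exact ht _ (by omega) (by omega)
    rwa [show t + hi - lo = t + (hi - lo) by ring] at this
  have prev {t : ℤ} (ht : zeroOn t) : d (t - 1) = 0 := by
    have := vanish (i := t - 1 + hi) hhi fun k hk hne => by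
      have := hsupp k hk
      exact ht _ (by omega) (by omega)
    rwa [add_sub_cancel_right] at this
  have zeroOn_all (t : ℤ) : zeroOn t := by
    induction t using Int.induction_on with
    | zero => simpa [zeroOn] using hwin
    | succ t ht =>
      intro j h₁ h₂
      by_cases hj : j < t + (hi - lo)
      · exact ht j (by omega) hj
      · obtain rfl : j = t + (hi - lo) := by omega
        exact next ht
    | pred t ht =>
      intro j h₁ h₂
      by_cases hj : -(t : ℤ) ≤ j
      · exact ht j hj (by omega)
      · obtain rfl : j = -(t : ℤ) - 1 := by omega
        exact prev ht
  funext j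
  simpa using next (zeroOn_all (j - (hi - lo)))

end Semiring

section Ring

variable {R V : Type*} [Ring R] [AddCommGroup V] [Module R V]

lemma laurentSMul_sub_right (g : R[T;T⁻¹]) (d e : ℤ → V) :
    laurentSMul g (d - e) = laurentSMul g d - laurentSMul g e := by
  funext i
  simp only [laurentSMul, Pi.sub_apply, smul_sub, Finsupp.sum, Finset.sum_sub_distrib]

theorem finite_setOf_laurentSMul_eq_zero [NoZeroSMulDivisors R V] [Finite V] {g : R[T;T⁻¹]}
    (hg : g ≠ 0) : {d : ℤ → V | laurentSMul g d = 0}.Finite := by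
  have hne : g.coeff.support.Nonempty :=
    Finsupp.support_nonempty_iff.mpr (mt AddMonoidAlgebra.coeff_eq_zero.mp hg)
  set lo := g.coeff.support.min' hne
  set hi := g.coeff.support.max' hne
  have hlo : g.coeff lo ≠ 0 := Finsupp.mem_support_iff.mp (Finset.min'_mem _ _)
  have hhi : g.coeff hi ≠ 0 := Finsupp.mem_support_iff.mp (Finset.max'_mem _ _)
  have hsupp (k) (hk : k ∈ g.coeff.support) : lo ≤ k ∧ k ≤ hi :=
    ⟨Finset.min'_le _ _ hk, Finset.le_max' _ _ hk⟩
  let restrict (d : ℤ → V) : Fin (hi - lo).toNat → V := fun t => d t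
  refine Set.Finite.of_finite_image (f := restrict) (Set.toFinite _) fun d hd e he hde => ?_
  rw [← sub_eq_zero]
  refine eq_zero_of_laurentSMul_eq_zero hlo hhi hsupp ?_ fun j hj₀ hj => ?_
  · rw [laurentSMul_sub_right, Set.mem_ofPred.mp hd, Set.mem_ofPred.mp he, sub_zero]
  · have := congrFun hde ⟨j.toNat, by omega⟩
    simp only [restrict, Int.toNat_of_nonneg hj₀] at this
    rw [Pi.sub_apply, this, sub_self]

end Ring

section Tychonoff

variable {S : Type*}

lemma tdist_pos {x y : ℤ → S} (h : x ≠ y) : 0 < tdist x y := by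
  rw [tdist, if_neg h]
  positivity

lemma tdist_sub_eq [AddGroup S] (x y : ℤ → S) : tdist x y = tdist (x - y) 0 := by
  simp only [tdist, sub_eq_zero, Pi.sub_apply, Pi.zero_apply, ne_eq]

lemma tdist_le_two_zpow_iff {x y : ℤ → S} (N : ℕ) :
    tdist x y ≤ 2 ^ (-(N : ℤ)) ↔ ∀ j : ℤ, j.natAbs < N → x j = y j := by
  by_cases hxy : x = y
  · simp [tdist, hxy]
  have hne : {k : ℕ | ∃ j : ℤ, j.natAbs = k ∧ x j ≠ y j}.Nonempty := by
    obtain ⟨j, hj⟩ := Function.ne_iff.mp hxy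
    exact ⟨_, j, rfl, hj⟩
  rw [tdist, if_neg hxy, zpow_le_zpow_iff_right₀ one_lt_two, neg_le_neg_iff, Nat.cast_le,
    le_csInf_iff' hne]
  constructor
  · intro h j hj
    by_contra hne
    exact (h ⟨j, rfl, hne⟩).not_gt hj
  · rintro h _ ⟨j, rfl, hj⟩
    by_contra hlt
    exact hj (h j (not_le.mp hlt))

lemma exists_pos_le_tdist_of_finite {s : Set (ℤ → S)} (hs : s.Finite) (x : ℤ → S) :
    ∃ δ > 0, ∀ e ∈ s, e ≠ x → δ ≤ tdist e x := by
  by_cases hne : (s \ {x}).Nonempty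
  · obtain ⟨e₀, ⟨-, he₀⟩, hmin⟩ := Set.exists_min_image _ (tdist · x) hs.sdiff hne
    exact ⟨_, tdist_pos he₀, fun e he hex => hmin e ⟨he, hex⟩⟩
  · exact ⟨1, one_pos, fun e he hex => absurd ⟨e, he, hex⟩ hne⟩

theorem PosExpansive.of_semiconj {T : Type*} {F : (ℤ → S) → (ℤ → S)}
    {G : (ℤ → T) → (ℤ → T)} {φ : (ℤ → T) → (ℤ → S)} (hφ : Function.Semiconj φ G F) {K δ : ℝ}
    (hK : 0 < K) (hδ : 0 < δ)
    (hlip : ∀ u v, tdist (φ u) (φ v) ≤ K * tdist u v)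
    (hsep : ∀ u v, u ≠ v → φ u = φ v → δ ≤ tdist u v) (hF : PosExpansive F) :
    PosExpansive G := by
  obtain ⟨ε, hε, hF⟩ := hF
  refine ⟨min (ε / K) δ, lt_min (div_pos hε hK) hδ, fun c c' hcc' => ?_⟩
  by_cases hφc : φ c = φ c'
  · exact ⟨0, (min_le_right _ _).trans (hsep c c' hcc' hφc)⟩
  obtain ⟨ℓ, hℓ⟩ := hF _ _ hφc
  refine ⟨ℓ, (min_le_left _ _).trans ((div_le_iff₀' hK).mpr ?_)⟩
  calc ε ≤ tdist (F^[ℓ] (φ c)) (F^[ℓ] (φ c')) := hℓ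
    _ = tdist (φ (G^[ℓ] c)) (φ (G^[ℓ] c')) := by
      rw [(hφ.iterate_right ℓ).eq, (hφ.iterate_right ℓ).eq]
    _ ≤ K * tdist (G^[ℓ] c) (G^[ℓ] c') := hlip _ _

end Tychonoff

theorem Matrix.mul_adjugate_eq_adjugate_mul_of_mul_eq_mul {ι R : Type*} [Fintype ι]
    [DecidableEq ι] [CommRing R] [NoZeroDivisors R] {A B Q : Matrix ι ι R} (hQ : Q.det ≠ 0)
    (hAQ : A * Q = Q * B) : B * Q.adjugate = Q.adjugate * A := by
  have key : Q.det • (B * Q.adjugate) = Q.det • (Q.adjugate * A) :=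
    calc Q.det • (B * Q.adjugate) = Q.adjugate * (Q * B) * Q.adjugate := by
          rw [← mul_assoc, Matrix.adjugate_mul, Matrix.smul_mul, Matrix.smul_mul, Matrix.one_mul]
      _ = Q.adjugate * (A * Q) * Q.adjugate := by rw [hAQ]
      _ = Q.det • (Q.adjugate * A) := by
          rw [mul_assoc, mul_assoc, Matrix.mul_adjugate, Matrix.mul_smul, Matrix.mul_smul,
            Matrix.mul_one]
  ext i j
  exact mul_left_cancel₀ hQ (by simpa using congrFun₂ key i j)

section LinearCA

variable {m n : ℕ}

lemma lcaFun_apply (M : Matrix (Fin n) (Fin n) (Lm m)) (c : ℤ → Fin n → ZMod m)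
    (i : ℤ) (a : Fin n) : lcaFun M c i a = ∑ b, laurentSMul (M a b) (fun j => c j b) i :=
  rfl

lemma lcaFun_mul (M N : Matrix (Fin n) (Fin n) (Lm m)) (c : ℤ → Fin n → ZMod m) :
    lcaFun (M * N) c = lcaFun M (lcaFun N c) := by
  funext i a
  simp only [lcaFun_apply, Matrix.mul_apply, laurentSMul_sum_left, laurentSMul_mul,
    Finset.sum_apply]
  rw [Finset.sum_comm]
  congr! 1 with b
  rw [← Finset.sum_apply, ← laurentSMul_sum_right, Finset.sum_fn]

lemma lcaFun_sub (M : Matrix (Fin n) (Fin n) (Lm m)) (x y : ℤ → Fin n → ZMod m) :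
    lcaFun M (x - y) = lcaFun M x - lcaFun M y := by
  funext i a
  simp only [lcaFun, Pi.sub_apply, Finsupp.sum, mul_sub, Finset.sum_sub_distrib]

lemma lcaFun_zero (M : Matrix (Fin n) (Fin n) (Lm m)) : lcaFun M 0 = 0 := by
  simpa using lcaFun_sub M 0 0

lemma lcaFun_smul_one (g : Lm m) (c : ℤ → Fin n → ZMod m) :
    lcaFun (g • (1 : Matrix (Fin n) (Fin n) (Lm m))) c = laurentSMul g c := by
  funext i a
  rw [lcaFun_apply, Finset.sum_eq_single a]
  · simp [laurentSMul, Finsupp.sum]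
  · intro b _ hb
    simp [Matrix.one_apply_ne' hb]
  · simp

lemma laurentSMul_det_eq_zero_of_lcaFun_eq_zero {Q : Matrix (Fin n) (Fin n) (Lm m)}
    {d : ℤ → Fin n → ZMod m} (h : lcaFun Q d = 0) : laurentSMul Q.det d = 0 := by
  rw [← lcaFun_smul_one, ← Matrix.adjugate_mul, lcaFun_mul, h, lcaFun_zero]

lemma exists_radius (M : Matrix (Fin n) (Fin n) (Lm m)) :
    ∃ r : ℕ, ∀ a b, ∀ k ∈ (M a b).coeff.support, k.natAbs ≤ r :=
  ⟨Finset.univ.sup fun ab : Fin n × Fin n => (M ab.1 ab.2).coeff.support.sup Int.natAbs,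
    fun a b _ hk => (Finset.le_sup hk).trans
      (Finset.le_sup (f := fun ab : Fin n × Fin n => (M ab.1 ab.2).coeff.support.sup Int.natAbs)
        (Finset.mem_univ (a, b)))⟩

variable {M : Matrix (Fin n) (Fin n) (Lm m)} {r : ℕ}

lemma lcaFun_apply_congr (hr : ∀ a b, ∀ k ∈ (M a b).coeff.support, k.natAbs ≤ r)
    {u v : ℤ → Fin n → ZMod m} {i : ℤ}
    (h : ∀ j, (i - j).natAbs ≤ r → u j = v j) : lcaFun M u i = lcaFun M v i := by
  funext a
  refine Finset.sum_congr rfl fun b _ => Finsupp.sum_congr fun k hk => ?_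
  rw [h (i - k) (by simpa using hr a b k hk)]

lemma tdist_lcaFun_le (hr : ∀ a b, ∀ k ∈ (M a b).coeff.support, k.natAbs ≤ r)
    (u v : ℤ → Fin n → ZMod m) :
    tdist (lcaFun M u) (lcaFun M v) ≤ 2 ^ (r : ℤ) * tdist u v := by
  by_cases huv : u = v
  · simp [huv, tdist]
  set N := sInf {k : ℕ | ∃ j : ℤ, j.natAbs = k ∧ u j ≠ v j}
  have hN : tdist u v = 2 ^ (-(N : ℤ)) := by rw [tdist, if_neg huv]
  have agree := (tdist_le_two_zpow_iff N).mp hN.le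
  calc tdist (lcaFun M u) (lcaFun M v) ≤ 2 ^ (-((N - r : ℕ) : ℤ)) :=
        (tdist_le_two_zpow_iff _).mpr fun i hi => lcaFun_apply_congr hr fun j hj =>
          agree j (by omega)
    _ ≤ 2 ^ ((r : ℤ) + -(N : ℤ)) := zpow_le_zpow_right₀ one_le_two (by omega)
    _ = 2 ^ (r : ℤ) * tdist u v := by rw [zpow_add₀ two_ne_zero, hN]

end LinearCA

lemma exists_pos_le_tdist_of_lcaFun_eq {p n : ℕ} [Fact p.Prime]
    {Q : Matrix (Fin n) (Fin n) (Lm p)} (hQ : Q.det ≠ 0) :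
    ∃ δ > 0, ∀ u v, u ≠ v → lcaFun Q u = lcaFun Q v → δ ≤ tdist u v := by
  obtain ⟨δ, hδ, hle⟩ :=
    exists_pos_le_tdist_of_finite (finite_setOf_laurentSMul_eq_zero (V := Fin n → ZMod p) hQ) 0
  refine ⟨δ, hδ, fun u v huv h => ?_⟩
  rw [tdist_sub_eq]
  refine hle _ (laurentSMul_det_eq_zero_of_lcaFun_eq_zero ?_) (sub_ne_zero.mpr huv)
  rw [lcaFun_sub, h, sub_self]

theorem PosExpansive.lcaFun_of_mul_eq_mul {p n : ℕ} [Fact p.Prime]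
    {A B Q : Matrix (Fin n) (Fin n) (Lm p)} (hQ : Q.det ≠ 0) (hAQ : A * Q = Q * B)
    (h : PosExpansive (lcaFun A)) : PosExpansive (lcaFun B) := by
  obtain ⟨r, hr⟩ := exists_radius Q
  obtain ⟨δ, hδ, hsep⟩ := exists_pos_le_tdist_of_lcaFun_eq hQ
  refine h.of_semiconj (fun c => ?_) (zpow_pos two_pos r) hδ (tdist_lcaFun_le hr) hsep
  rw [← lcaFun_mul, ← lcaFun_mul, hAQ]

theorem stmt6_general (p n : ℕ) (hp : p.Prime)
    (A B Q : Matrix (Fin n) (Fin n) (Lm p))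
    (hQ : Q.det ≠ 0) (hAQ : A * Q = Q * B) :
    PosExpansive (lcaFun A) ↔ PosExpansive (lcaFun B) := by
  have := Fact.mk hp
  have hQadj : Q.adjugate.det ≠ 0 := by
    rw [Matrix.det_adjugate]
    exact pow_ne_zero _ hQ
  exact ⟨fun h => h.lcaFun_of_mul_eq_mul hQ hAQ, fun h => h.lcaFun_of_mul_eq_mul hQadj
    (Matrix.mul_adjugate_eq_adjugate_mul_of_mul_eq_mul hQ hAQ)⟩

/-- Lemma `main2`: if `A Q = Q B` with `det Q ≠ 0` over `𝕃_p`, then the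
LCA determined by `A` is positively expansive iff the LCA determined by `B` is. -/
theorem stmt6 (p n : ℕ) (hp : p.Prime) (hn : 1 < n)
    (A B Q : Matrix (Fin n) (Fin n) (Lm p))
    (hQ : Q.det ≠ 0) (hAQ : A * Q = Q * B) :
    PosExpansive (lcaFun A) ↔ PosExpansive (lcaFun B) :=
  stmt6_general p n hp A B Q hQ hAQ
end

section
/- Let p be prime, let k_1 ≥ k_2 ≥ ⋯ ≥ k_n ≥ 1 be naturals, let G = ℤ/p^{k_1}ℤ × ⋯ × ℤ/p^{k_n}ℤ and Ĝ = (ℤ/p^{k_1}ℤ)^n, and let Ψ : G^ℤ → Ĝ^ℤ be the componentwise extension of the embedding ψ. Let F : G^ℤ → G^ℤ be any additive CA over G and let L be any LCA over Ĝ such that L ∘ Ψ = Ψ ∘ F. Then F is positively expansive if and only if L is positively expansive. -/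
open LaurentPolynomial
open scoped Classical

/-- `F` is (the global rule of) a cellular automaton: it is given by a local rule `f`
of some radius `r`, `F(c)_i = f(c_{i-r}, …, c_{i+r})`. -/
def IsCA {S : Type*} (F : (ℤ → S) → (ℤ → S)) : Prop :=
  ∃ (r : ℕ) (f : (Fin (2 * r + 1) → S) → S),
    ∀ (c : ℤ → S) (i : ℤ), F c i = f (fun t => c (i - (r : ℤ) + ((t : ℕ) : ℤ)))

/-- The embedding `ψ : G → Ĝ`, `ψ(h)ⁱ = p^{k₁ - kᵢ} hⁱ` (using the canonical lift
`ZMod.val`), extended componentwise to configurations, `Ψ : G^ℤ → Ĝ^ℤ`. -/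
noncomputable def PsiMap (p n : ℕ) (hn : 0 < n) (k : Fin n → ℕ)
    (c : ℤ → ∀ i : Fin n, ZMod (p ^ k i)) : ℤ → Fin n → ZMod (p ^ k ⟨0, hn⟩) :=
  fun j i => ((c j i).val : ZMod (p ^ k ⟨0, hn⟩)) *
    (p : ZMod (p ^ k ⟨0, hn⟩)) ^ (k ⟨0, hn⟩ - k i)

/-!
`Ψ` acts cellwise by the injective map `ψ`, so it preserves the Tychonoff distance and carries
`F`-orbits to `L`-orbits; hence expansiveness of `L` pulls back to `F`. Conversely, for `d ≠ d'`
the difference `e = d - d'` has a nonzero multiple `p^m e` annihilated by `p`, and the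
`p`-torsion of `Ĝ` lies in `ψ(G)`. As `L` is additive, the `L`-orbit of `p^m e = Ψ c` is `p^m`
times the difference of the orbits of `d` and `d'`, while it is also the `Ψ`-image of the
`F`-orbit of `c`; so the separation that `F` produces between `c` and `0` is seen by `d`, `d'`.
-/

section Configurations

variable {S T : Type*}

lemma tdist_nonneg (c c' : ℤ → S) : 0 ≤ tdist c c' := by
  unfold tdist
  split_ifs <;> positivity

lemma tdist_le_tdist_of_ne_imp {c c' : ℤ → S} {d d' : ℤ → T}
    (h : ∀ j, d j ≠ d' j → c j ≠ c' j) : tdist d d' ≤ tdist c c' := by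
  by_cases hd : d = d'
  · simpa [tdist, hd] using tdist_nonneg c c'
  obtain ⟨j, hj⟩ := Function.ne_iff.mp hd
  have hc : c ≠ c' := fun hc => h j hj (congrFun hc j)
  have hne : {m : ℕ | ∃ j : ℤ, j.natAbs = m ∧ d j ≠ d' j}.Nonempty := ⟨_, j, rfl, hj⟩
  have hsub : {m : ℕ | ∃ j : ℤ, j.natAbs = m ∧ d j ≠ d' j}
      ⊆ {m : ℕ | ∃ j : ℤ, j.natAbs = m ∧ c j ≠ c' j} :=
    fun m ⟨j, hjm, hj⟩ => ⟨j, hjm, h j hj⟩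
  simp only [tdist, if_neg hd, if_neg hc]
  gcongr
  norm_num

lemma tdist_comp_of_injective {φ : S → T} (hφ : φ.Injective) (c c' : ℤ → S) :
    tdist (φ ∘ c) (φ ∘ c') = tdist c c' :=
  le_antisymm (tdist_le_tdist_of_ne_imp fun _ hj h => hj (congrArg φ h))
    (tdist_le_tdist_of_ne_imp fun _ hj h => hj (hφ h))

theorem PosExpansive.of_semiconj_s14 {F : (ℤ → S) → (ℤ → S)} {L : (ℤ → T) → (ℤ → T)}
    {φ : S → T} (hφ : φ.Injective) (hFL : Function.Semiconj (φ ∘ ·) F L)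
    (hL : PosExpansive L) : PosExpansive F := by
  obtain ⟨ε, hε, hexp⟩ := hL
  refine ⟨ε, hε, fun c c' hc => ?_⟩
  obtain ⟨ℓ, hℓ⟩ := hexp _ _ (hφ.comp_left.ne hc)
  refine ⟨ℓ, ?_⟩
  rwa [← hFL.iterate_right ℓ c, ← hFL.iterate_right ℓ c', tdist_comp_of_injective hφ] at hℓ

theorem PosExpansive.of_semiconj_of_nsmul_mem_range [Zero S] {V : Type*} [AddCommGroup V]
    {F : (ℤ → S) → (ℤ → S)} {L : (ℤ → V) →+ (ℤ → V)} {φ : S → V} (hφ : φ.Injective)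
    (hφ0 : φ 0 = 0)
    (hFL : Function.Semiconj (φ ∘ ·) F L)
    (hrange : ∀ e : ℤ → V, e ≠ 0 → ∃ (m : ℕ) (c : ℤ → S), φ ∘ c = m • e ∧ m • e ≠ 0)
    (hF : PosExpansive F) : PosExpansive L := by
  obtain ⟨ε, hε, hexp⟩ := hF
  refine ⟨ε, hε, fun d d' hd => ?_⟩
  obtain ⟨m, c, hc, hm⟩ := hrange (d - d') (sub_ne_zero.mpr hd)
  have hφ0' : φ ∘ (0 : ℤ → S) = 0 := funext fun _ => hφ0
  have hc0 : c ≠ 0 := by rintro rfl; exact hm (hc.symm.trans hφ0')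
  obtain ⟨ℓ, hℓ⟩ := hexp c 0 hc0
  have hiter : ∀ x, φ ∘ F^[ℓ] x = L^[ℓ] (φ ∘ x) := hFL.iterate_right ℓ
  refine ⟨ℓ, hℓ.trans ?_⟩
  calc tdist (F^[ℓ] c) (F^[ℓ] 0)
      = tdist (φ ∘ F^[ℓ] c) (φ ∘ F^[ℓ] 0) := (tdist_comp_of_injective hφ _ _).symm
    _ = tdist (m • (L^[ℓ] d - L^[ℓ] d')) 0 := by
      rw [hiter, hiter, hc, hφ0', iterate_map_nsmul, iterate_map_sub, iterate_map_zero]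
    _ ≤ tdist (L^[ℓ] d) (L^[ℓ] d') := tdist_le_tdist_of_ne_imp fun j hj h => hj (by simp [h])

end Configurations

lemma exists_pow_nsmul_ne_zero_and_nsmul_eq_zero {M : Type*} [AddMonoid M] {p K : ℕ} {e : M}
    (he : e ≠ 0) (hK : p ^ K • e = 0) : ∃ m : ℕ, p ^ m • e ≠ 0 ∧ p • p ^ m • e = 0 := by
  classical
  have hex : ∃ m, p ^ m • e = 0 := ⟨K, hK⟩
  have hpos : Nat.find hex ≠ 0 := fun h => he (by simpa [h] using Nat.find_spec hex)
  refine ⟨Nat.find hex - 1, Nat.find_min hex (by omega), ?_⟩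
  rw [← mul_nsmul', ← pow_succ', Nat.sub_add_cancel (Nat.pos_of_ne_zero hpos)]
  exact Nat.find_spec hex

noncomputable def powEmbed (p b : ℕ) {a : ℕ} (y : ZMod (p ^ a)) : ZMod (p ^ b) :=
  (y.val : ZMod (p ^ b)) * (p : ZMod (p ^ b)) ^ (b - a)

section PowEmbed

variable {p a b : ℕ}

lemma powEmbed_eq_natCast (y : ZMod (p ^ a)) :
    powEmbed p b y = ((y.val * p ^ (b - a) : ℕ) : ZMod (p ^ b)) := by
  simp [powEmbed]

@[simp]
lemma powEmbed_zero : powEmbed p b (0 : ZMod (p ^ a)) = 0 := by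
  simp [powEmbed]

lemma powEmbed_injective (hp : 0 < p) (hab : a ≤ b) :
    Function.Injective (powEmbed p b : ZMod (p ^ a) → ZMod (p ^ b)) := by
  have : NeZero (p ^ a) := ⟨(pow_pos hp a).ne'⟩
  have hlt (z : ZMod (p ^ a)) : z.val * p ^ (b - a) < p ^ b := by
    calc z.val * p ^ (b - a) < p ^ a * p ^ (b - a) :=
          Nat.mul_lt_mul_of_pos_right z.val_lt (pow_pos hp _)
      _ = p ^ b := by rw [← pow_add, Nat.add_sub_cancel' hab]
  intro x y h
  have hv := congrArg ZMod.val h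
  rw [powEmbed_eq_natCast, powEmbed_eq_natCast, ZMod.val_cast_of_lt (hlt x),
    ZMod.val_cast_of_lt (hlt y)] at hv
  exact ZMod.val_injective _ (Nat.eq_of_mul_eq_mul_right (pow_pos hp _) hv)

lemma exists_powEmbed_eq_of_mul_eq_zero (hp : 0 < p) (ha : 1 ≤ a) (hab : a ≤ b)
    {x : ZMod (p ^ b)} (hx : (p : ZMod (p ^ b)) * x = 0) :
    ∃ y : ZMod (p ^ a), powEmbed p b y = x := by
  have : NeZero (p ^ b) := ⟨(pow_pos hp b).ne'⟩
  rw [← ZMod.natCast_zmod_val x, ← Nat.cast_mul, ZMod.natCast_eq_zero_iff] at hx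
  obtain ⟨q, hq⟩ : p ^ (b - 1) ∣ x.val :=
    Nat.dvd_of_mul_dvd_mul_left hp (by rwa [← pow_succ', Nat.sub_add_cancel (ha.trans hab)])
  refine ⟨((q * p ^ (a - 1) : ℕ) : ZMod (p ^ a)), ?_⟩
  rw [powEmbed_eq_natCast, ZMod.val_natCast, ← ZMod.natCast_zmod_val x, hq,
    mul_comm (p ^ (b - 1)), ZMod.natCast_eq_natCast_iff]
  have hmod := (Nat.mod_modEq (q * p ^ (a - 1)) (p ^ a)).mul_right' (p ^ (b - a))
  rwa [← pow_add, Nat.add_sub_cancel' hab, mul_assoc, ← pow_add,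
    show a - 1 + (b - a) = b - 1 by omega] at hmod

end PowEmbed

noncomputable def psi (p : ℕ) {n : ℕ} (hn : 0 < n) (k : Fin n → ℕ) (h : ∀ i, ZMod (p ^ k i)) :
    Fin n → ZMod (p ^ k ⟨0, hn⟩) :=
  fun i => powEmbed p _ (h i)

section Psi

variable {p n : ℕ} {hn : 0 < n} {k : Fin n → ℕ}

lemma psi_zero : psi p hn k 0 = 0 := by
  ext i
  exact powEmbed_zero

lemma psi_injective (hp : 0 < p) (hk : ∀ i, k i ≤ k ⟨0, hn⟩) : (psi p hn k).Injective :=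
  fun _ _ h => funext fun i => powEmbed_injective hp (hk i) (congrFun h i)

lemma exists_nsmul_ne_zero_eq_psi_comp (hp : 0 < p) (hk1 : ∀ i, 1 ≤ k i)
    (hk : ∀ i, k i ≤ k ⟨0, hn⟩) (e : ℤ → Fin n → ZMod (p ^ k ⟨0, hn⟩)) (he : e ≠ 0) :
    ∃ (m : ℕ) (c : ℤ → ∀ i, ZMod (p ^ k i)), psi p hn k ∘ c = m • e ∧ m • e ≠ 0 := by
  have hK : p ^ k ⟨0, hn⟩ • e = 0 := by
    ext j i
    simp
  obtain ⟨m, hm, hpm⟩ := exists_pow_nsmul_ne_zero_and_nsmul_eq_zero he hK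
  have htors (j : ℤ) (i : Fin n) : (p : ZMod (p ^ k ⟨0, hn⟩)) * (p ^ m • e) j i = 0 := by
    simpa [nsmul_eq_mul] using congrFun (congrFun hpm j) i
  choose c hc using fun j i => exists_powEmbed_eq_of_mul_eq_zero hp (hk1 i) (hk i) (htors j i)
  exact ⟨p ^ m, c, funext fun j => funext (hc j), hm⟩

end Psi

noncomputable def lcaAddHom {m n : ℕ} (A : Matrix (Fin n) (Fin n) (Lm m)) :
    (ℤ → Fin n → ZMod m) →+ (ℤ → Fin n → ZMod m) where
  toFun := lcaFun A
  map_zero' := by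
    ext
    simp [lcaFun]
  map_add' x y := by
    ext
    simp [lcaFun, mul_add, Finsupp.sum_add, Finset.sum_add_distrib]

theorem stmt14_general (p : ℕ) (hp : p.Prime) (n : ℕ) (hn : 0 < n) (k : Fin n → ℕ)
    (hk1 : ∀ i : Fin n, 1 ≤ k i)
    (hanti : ∀ i j : Fin n, i ≤ j → k j ≤ k i)
    (F : (ℤ → ∀ i : Fin n, ZMod (p ^ k i)) → (ℤ → ∀ i : Fin n, ZMod (p ^ k i)))
    (L : (ℤ → Fin n → ZMod (p ^ k ⟨0, hn⟩)) → (ℤ → Fin n → ZMod (p ^ k ⟨0, hn⟩)))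
    (hLlin : ∃ A : Matrix (Fin n) (Fin n) (Lm (p ^ k ⟨0, hn⟩)), L = lcaFun A)
    (hcomm : ∀ c, L (PsiMap p n hn k c) = PsiMap p n hn k (F c)) :
    PosExpansive F ↔ PosExpansive L := by
  obtain ⟨A, rfl⟩ := hLlin
  have hk : ∀ i, k i ≤ k ⟨0, hn⟩ := fun i => hanti _ i (Nat.zero_le _)
  -- `PsiMap p n hn k c` unfolds to `psi p hn k ∘ c`
  have hFL : Function.Semiconj (psi p hn k ∘ ·) F (lcaAddHom A) := fun c => (hcomm c).symm
  exact ⟨PosExpansive.of_semiconj_of_nsmul_mem_range (psi_injective hp.pos hk) psi_zero hFL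
      (exists_nsmul_ne_zero_eq_psi_comp hp.pos hk1 hk),
    PosExpansive.of_semiconj_s14 (psi_injective hp.pos hk) hFL⟩

/-- let `G = ℤ/p^{k₁}ℤ × ⋯ × ℤ/p^{kₙ}ℤ` with `k₁ ≥ ⋯ ≥ kₙ ≥ 1`,
`Ĝ = (ℤ/p^{k₁}ℤ)ⁿ`, and `Ψ : G^ℤ → Ĝ^ℤ` the componentwise extension of `ψ`.
If `F` is an additive CA over `G` and `L` is an LCA over `Ĝ` with `L ∘ Ψ = Ψ ∘ F`,
then `F` is positively expansive iff `L` is positively expansive. -/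
theorem stmt14 (p : ℕ) (hp : p.Prime) (n : ℕ) (hn : 0 < n) (k : Fin n → ℕ)
    (hk1 : ∀ i : Fin n, 1 ≤ k i)
    (hanti : ∀ i j : Fin n, i ≤ j → k j ≤ k i)
    (F : (ℤ → ∀ i : Fin n, ZMod (p ^ k i)) → (ℤ → ∀ i : Fin n, ZMod (p ^ k i)))
    (hFca : IsCA F)
    (hFadd : ∀ c c', F (c + c') = F c + F c')
    (L : (ℤ → Fin n → ZMod (p ^ k ⟨0, hn⟩)) → (ℤ → Fin n → ZMod (p ^ k ⟨0, hn⟩)))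
    (hLlin : ∃ A : Matrix (Fin n) (Fin n) (Lm (p ^ k ⟨0, hn⟩)), L = lcaFun A)
    (hcomm : ∀ c, L (PsiMap p n hn k c) = PsiMap p n hn k (F c)) :
    PosExpansive F ↔ PosExpansive L :=
  stmt14_general p hp n hn k hk1 hanti F L hLlin hcomm
end
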